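/- arXiv:1712.03600 — 2 statements merged into one kernel-verified Lean document; each statement's English description precedes it below -/
import Mathlib

section
/- Let R be a commutative ring with 1. Every homogeneous polynomial f(x,y,z) in R[x,y,z] of degree 2 admits a linear Pfaffian R-representation, i.e., there exist 4×4 skew-symmetric matrices A, B, C with entries in R such that Pf(xA + yB + zC) = f(x,y,z). -/
/-!
A quadratic form `f` in `x, y, z` lies in the ideal `(x, y, z)`; taking degree-one components of
the cofactors gives `f = x g₀ + y g₁ + z g₂` with linear forms `gᵢ`. The skew matrix with first
row `(0, x, y, z)` and the cross-product matrix of `(g₀, g₁, g₂)` as lower right block has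
Pfaffian `x g₀ + y g₁ + z g₂`, and it is linear in `x, y, z` because the `gᵢ` are.
-/

open Matrix MvPolynomial

/-- The Pfaffian of a `2d × 2d` matrix, defined recursively by expansion along the
first row: `Pf(A) = Σ_{j=2}^{2d} (-1)^j a_{1j} Pf(A^{[1,j]})`. -/
def Pf {R : Type*} [CommRing R] : (d : ℕ) → Matrix (Fin (2 * d)) (Fin (2 * d)) R → R
  | 0, _ => 1
  | d + 1, A =>
      ∑ j : Fin (2 * d + 1), (-1 : R) ^ (j : ℕ) * A 0 j.succ *
        Pf d (fun k l => A ((j.succAbove k).succ) ((j.succAbove l).succ))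

/-- A matrix is skew-symmetric (alternating): `Aᵀ = -A` and the diagonal is zero. -/
def IsSkew {R : Type*} [CommRing R] {n : Type*} (A : Matrix n n R) : Prop :=
  Aᵀ = -A ∧ ∀ i, A i i = 0

namespace MvPolynomial

variable {σ R : Type*} [CommSemiring R]

theorem homogeneousComponent_succ_mul_X (n : ℕ) (p : MvPolynomial σ R) (i : σ) :
    homogeneousComponent (n + 1) (p * X i) = homogeneousComponent n p * X i := by
  induction p using MvPolynomial.induction_on' with
  | monomial d r =>
    rw [X, monomial_mul, mul_one,
      homogeneousComponent_of_mem (isHomogeneous_monomial r rfl),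
      homogeneousComponent_of_mem (isHomogeneous_monomial r rfl)]
    simp only [map_add, Finsupp.degree_single, Nat.add_right_cancel_iff]
    split_ifs <;> simp [monomial_mul]
  | add p q hp hq => simp only [add_mul, map_add, hp, hq]

theorem IsHomogeneous.exists_sum_X_mul [Fintype σ] {f : MvPolynomial σ R} {n : ℕ}
    (hf : f.IsHomogeneous (n + 1)) :
    ∃ g : σ → MvPolynomial σ R, (∀ i, (g i).IsHomogeneous n) ∧ ∑ i, X i * g i = f := by
  have hmem : f ∈ Ideal.span (Set.range X) := by
    rw [← Set.image_univ, mem_ideal_span_X_image]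
    intro m hm
    by_contra! hzero
    have hdeg := hf (mem_support_iff.mp hm)
    rw [show m = 0 from Finsupp.ext fun i => hzero i trivial, map_zero] at hdeg
    exact n.succ_ne_zero hdeg.symm
  obtain ⟨c, hc⟩ := Ideal.mem_span_range_iff_exists_fun.mp hmem
  refine ⟨fun i => homogeneousComponent n (c i), fun i => homogeneousComponent_isHomogeneous n _, ?_⟩
  calc ∑ i, X i * homogeneousComponent n (c i)
      = homogeneousComponent (n + 1) (∑ i, c i * X i) := by
        simp only [map_sum, homogeneousComponent_succ_mul_X, mul_comm]
    _ = f := by rw [hc, homogeneousComponent_eq_self hf]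

theorem IsHomogeneous.exists_sum_C_mul_X [Fintype σ] {g : MvPolynomial σ R}
    (hg : g.IsHomogeneous 1) : ∃ c : σ → R, ∑ i, C (c i) * X i = g := by
  rw [← mem_homogeneousSubmodule, homogeneousSubmodule_one_eq_span_X,
    Submodule.mem_span_range_iff_exists_fun] at hg
  simpa only [smul_eq_C_mul] using hg

end MvPolynomial

section Pfaffian

variable {R : Type*} [CommRing R]

theorem pf_two (M : Matrix (Fin 4) (Fin 4) R) :
    Pf 2 M = M 0 1 * M 2 3 - M 0 2 * M 1 3 + M 0 3 * M 1 2 := by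
  simp only [Pf, Nat.reduceMul, Nat.reduceAdd, Fin.isValue, Nat.mul_zero, Finset.univ_unique,
    Fin.default_eq_zero, Fin.val_eq_zero, pow_zero, Fin.succAbove, Fin.castSucc_zero,
    Fin.succ_zero_eq_one, Fin.castSucc_succ, one_mul, mul_one, Finset.sum_singleton,
    Fin.succ_one_eq_two, Fin.sum_univ_succ, Fin.coe_ofNat_eq_mod, Nat.zero_mod,
    lt_self_iff_false, ↓reduceIte, not_lt_zero, Fin.reduceSucc, Fin.val_succ, Fin.succ_pos,
    zero_add, pow_one, neg_mul, even_two, Even.neg_pow, one_pow, Fin.reduceLT]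
  ring

def skewOfDot (v w : Fin 3 → R) : Matrix (Fin 4) (Fin 4) R :=
  !![0, v 0, v 1, v 2;
     -v 0, 0, w 2, -w 1;
     -v 1, -w 2, 0, w 0;
     -v 2, w 1, -w 0, 0]

theorem isSkew_skewOfDot (v w : Fin 3 → R) : IsSkew (skewOfDot v w) :=
  ⟨by ext i j; fin_cases i <;> fin_cases j <;> simp [skewOfDot],
    fun i => by fin_cases i <;> simp [skewOfDot]⟩

theorem pf_skewOfDot (v w : Fin 3 → R) :
    Pf 2 (skewOfDot v w) = v ⬝ᵥ w := by
  rw [pf_two]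
  simp [skewOfDot, dotProduct, Fin.sum_univ_three]

end Pfaffian

theorem degree_two_pfaffian_rep {R : Type*} [CommRing R]
    (f : MvPolynomial (Fin 3) R) (hf : f.IsHomogeneous 2) :
    ∃ A B C : Matrix (Fin 4) (Fin 4) R, IsSkew A ∧ IsSkew B ∧ IsSkew C ∧
      Pf 2 (Matrix.of fun i j =>
        X 0 * MvPolynomial.C (A i j) + X 1 * MvPolynomial.C (B i j) +
          X 2 * MvPolynomial.C (C i j)) = f := by
  obtain ⟨g, hg, rfl⟩ := hf.exists_sum_X_mul (n := 1)
  choose c hc using fun i => (hg i).exists_sum_C_mul_X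
  refine ⟨skewOfDot ![1, 0, 0] (c · 0), skewOfDot ![0, 1, 0] (c · 1),
    skewOfDot ![0, 0, 1] (c · 2), isSkew_skewOfDot _ _, isSkew_skewOfDot _ _,
    isSkew_skewOfDot _ _, ?_⟩
  convert pf_skewOfDot X g using 2
  · refine Matrix.ext fun i j => ?_
    fin_cases i <;> fin_cases j <;> simp [skewOfDot, ← hc, Fin.sum_univ_three] <;> ring
  · rfl
end

section
/- Let R be a commutative ring with 1. For every a ∈ R and d ≥ 1, the monomial a·x^d (as a homogeneous polynomial in R[x,y,z]) admits a linear Pfaffian R-representation by 2d×2d skew-symmetric matrices. -/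
open Matrix MvPolynomial

/-!
With `B = C = 0` the pencil is `X 0 • A`, and `Pf (x • A) = x ^ d * Pf A`; since the Pfaffian
also commutes with ring homomorphisms, it suffices to find a skew matrix over `R` with Pfaffian
`a`. The standard symplectic form (blocks `[[0, 1], [-1, 0]]` along the diagonal) with its first
block scaled by `a` works: expanding along the first row only the entry `(0, 1)` survives, and its
minor is the standard symplectic form of size `2 (d - 1)`, whose Pfaffian is `1`.
-/

section Pfaffian

variable {R S : Type*} [CommRing R] [CommRing S]

theorem Pf_succ (d : ℕ) (A : Matrix (Fin (2 * (d + 1))) (Fin (2 * (d + 1))) R) :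
    Pf (d + 1) A = ∑ j : Fin (2 * d + 1), (-1 : R) ^ (j : ℕ) * A 0 j.succ *
      Pf d (A.submatrix (fun k => (j.succAbove k).succ) (fun k => (j.succAbove k).succ)) :=
  rfl

theorem Pf_smul (x : R) : ∀ (d : ℕ) (A : Matrix (Fin (2 * d)) (Fin (2 * d)) R),
    Pf d (x • A) = x ^ d * Pf d A
  | 0, _ => by simp [Pf]
  | d + 1, A => by
    rw [Pf_succ, Pf_succ, Finset.mul_sum]
    refine Finset.sum_congr rfl fun j _ => ?_
    set e := fun k : Fin (2 * d) => (j.succAbove k).succ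
    rw [show (x • A).submatrix e e = x • A.submatrix e e from rfl, Pf_smul x d,
      Matrix.smul_apply, smul_eq_mul]
    ring

theorem map_Pf (f : R →+* S) : ∀ (d : ℕ) (A : Matrix (Fin (2 * d)) (Fin (2 * d)) R),
    f (Pf d A) = Pf d (A.map f)
  | 0, _ => by simp [Pf]
  | d + 1, A => by
    simp only [Pf_succ, map_sum, map_mul, map_pow, map_neg, map_one, map_Pf f d,
      Matrix.submatrix_map, Matrix.map_apply]

end Pfaffian

section ScaledSymplectic

variable {R : Type*} [CommRing R]

def scaledSymplectic (c : R) (i j : ℕ) : R :=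
  if i % 2 = 0 ∧ j = i + 1 then (if i = 0 then c else 1)
  else if j % 2 = 0 ∧ i = j + 1 then -(if j = 0 then c else 1)
  else 0

def scaledSymplecticMatrix (c : R) (d : ℕ) : Matrix (Fin (2 * d)) (Fin (2 * d)) R :=
  Matrix.of fun i j => scaledSymplectic c i j

theorem isSkew_scaledSymplecticMatrix (c : R) (d : ℕ) : IsSkew (scaledSymplecticMatrix c d) := by
  refine ⟨Matrix.ext fun i j => ?_, fun i => ?_⟩ <;>
  · simp only [scaledSymplecticMatrix, scaledSymplectic, Matrix.transpose_apply, Matrix.neg_apply,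
      Matrix.of_apply]
    split_ifs <;> first | omega | simp

theorem scaledSymplectic_add_two (c : R) (k l : ℕ) : scaledSymplectic c (k + 2) (l + 2) = scaledSymplectic 1 k l := by
  unfold scaledSymplectic
  split_ifs <;> first | omega | rfl | simp_all

theorem scaledSymplectic_zero_of_ne_one (c : R) {j : ℕ} (hj : j ≠ 1) : scaledSymplectic c 0 j = 0 := by
  unfold scaledSymplectic
  split_ifs <;> first | omega | rfl | simp_all

theorem scaledSymplectic_zero_one (c : R) : scaledSymplectic c 0 1 = c := by
  simp [scaledSymplectic]

theorem Pf_scaledSymplecticMatrix_succ (c : R) (d : ℕ) :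
    Pf (d + 1) (scaledSymplecticMatrix c (d + 1)) = c * Pf d (scaledSymplecticMatrix 1 d) := by
  rw [Pf_succ, Fintype.sum_eq_single 0]
  · have hminor : (scaledSymplecticMatrix c (d + 1)).submatrix
        (fun k => ((0 : Fin (2 * d + 1)).succAbove k).succ)
        (fun k => ((0 : Fin (2 * d + 1)).succAbove k).succ) = scaledSymplecticMatrix 1 d := by
      ext k l
      simp [scaledSymplecticMatrix, scaledSymplectic_add_two]
    rw [hminor]
    simp [scaledSymplecticMatrix, Nat.mod_eq_of_lt (show 1 < 2 * (d + 1) by omega),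
      scaledSymplectic_zero_one]
  · intro j hj
    have hj1 : (j : ℕ) + 1 ≠ 1 := fun h => hj (Fin.ext (by simpa using h))
    simp [scaledSymplecticMatrix, scaledSymplectic_zero_of_ne_one c hj1]

theorem Pf_scaledSymplecticMatrix_one (d : ℕ) : Pf d (scaledSymplecticMatrix (1 : R) d) = 1 := by
  induction d with
  | zero => rfl
  | succ d ih => rw [Pf_scaledSymplecticMatrix_succ, ih, one_mul]

theorem Pf_scaledSymplecticMatrix (c : R) (d : ℕ) : Pf (d + 1) (scaledSymplecticMatrix c (d + 1)) = c := by
  rw [Pf_scaledSymplecticMatrix_succ, Pf_scaledSymplecticMatrix_one, mul_one]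

end ScaledSymplectic

theorem monomial_pfaffian_rep {R : Type*} [CommRing R] (a : R) (d : ℕ) (hd : 1 ≤ d) :
    ∃ A B C : Matrix (Fin (2 * d)) (Fin (2 * d)) R, IsSkew A ∧ IsSkew B ∧ IsSkew C ∧
      Pf d (Matrix.of fun i j =>
        X 0 * MvPolynomial.C (A i j) + X 1 * MvPolynomial.C (B i j) +
          X 2 * MvPolynomial.C (C i j)) = MvPolynomial.C a * X 0 ^ d := by
  obtain ⟨e, rfl⟩ : ∃ e, d = e + 1 := ⟨d - 1, by omega⟩
  have isSkew_zero : IsSkew (0 : Matrix (Fin (2 * (e + 1))) (Fin (2 * (e + 1))) R) :=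
    ⟨by simp, fun _ => rfl⟩
  refine ⟨scaledSymplecticMatrix a (e + 1), 0, 0, isSkew_scaledSymplecticMatrix a _, isSkew_zero, isSkew_zero,
    ?_⟩
  have hpencil : (Matrix.of fun i j => X 0 * MvPolynomial.C (scaledSymplecticMatrix a (e + 1) i j) +
      X 1 * MvPolynomial.C ((0 : Matrix (Fin (2 * (e + 1))) (Fin (2 * (e + 1))) R) i j) +
      X 2 * MvPolynomial.C ((0 : Matrix (Fin (2 * (e + 1))) (Fin (2 * (e + 1))) R) i j)) =
      (X 0 : MvPolynomial ℕ R) • (scaledSymplecticMatrix a (e + 1)).map MvPolynomial.C := by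
    ext i j
    simp
  rw [hpencil, Pf_smul, ← map_Pf, Pf_scaledSymplecticMatrix, mul_comm]
end
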